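/- Let m ∈ ℕ and n = mp with p an odd prime. If S ⊆ Z_n \ {0} is symmetric and p ∤ s for every s ∈ S, then the circulant graph Cay(Z_n, S) does not exhibit pretty good state transfer between any pair of distinct vertices. -/

import Mathlib

open Matrix Complex Filter Finset

/-- Adjacency matrix of the circulant graph Cay(Z_n, S). -/
noncomputable def cayAdj (n : ℕ) [NeZero n] (S : Finset (ZMod n)) : Matrix (ZMod n) (ZMod n) ℂ :=
  fun a b => if a - b ∈ S then 1 else 0

/-- Transition matrix H(t) = exp(-itA) of Cay(Z_n, S). -/
noncomputable def transM (n : ℕ) [NeZero n] (S : Finset (ZMod n)) (t : ℝ) :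
    Matrix (ZMod n) (ZMod n) ℂ :=
  NormedSpace.exp ((-(t : ℂ) * Complex.I) • cayAdj n S)

/-!
Write `e(x) = exp (2πi x / n)`. The characters `a ↦ e(l a)` are common row eigenvectors of
the adjacency matrix, with eigenvalues `λ_l = ∑_{s ∈ S} e(l s)`, so pretty good state transfer
from `u` to `v` along times `t_k` forces `exp (-i t_k λ_l) → γ e(l (v - u))` for every `l`.
Hence every relation `∑_i (λ_{a_i} - λ_{b_i}) = 0` yields `∏_i e((a_i - b_i)(v - u)) = 1`.
Symmetry of `S` gives `λ_{-1} = λ_1`, so `e(v - u)^2 = 1`. Since `e(m s)` is a nontrivial `p`-th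
root of unity for `s ∈ S`, `∑_{r < p} λ_{l + r m} = 0` for every `l`; comparing `l = 1` with
`l = 0` gives `e(v - u)^p = 1`. As `p` is odd, `e(v - u) = 1`, i.e. `u = v`.
-/

open scoped Topology
open ZMod (stdAddChar)

open scoped Norms.Operator in
theorem vecMul_exp_of_vecMul_eq_smul {𝕂 ι : Type*} [RCLike 𝕂] [Fintype ι] [DecidableEq ι]
    {M : Matrix ι ι 𝕂} {w : ι → 𝕂} {μ : 𝕂} (h : w ᵥ* M = μ • w) :
    w ᵥ* NormedSpace.exp M = NormedSpace.exp μ • w := by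
  have hpow (k : ℕ) : w ᵥ* M ^ k = μ ^ k • w := by
    induction k with
    | zero => simp
    | succ k ih => rw [pow_succ, ← vecMul_vecMul, ih, smul_vecMul, h, smul_smul, pow_succ]
  refine ((vecMulBilin 𝕂 𝕂 w).toContinuousLinearMap.hasSum
    (NormedSpace.exp_series_hasSum_exp' (𝕂 := 𝕂) M)).unique ?_
  simpa [hpow, smul_smul] using (NormedSpace.exp_series_hasSum_exp' (𝕂 := 𝕂) μ).smul_const w

theorem AddChar.sum_range_nsmul_eq_zero {A R : Type*} [AddMonoid A] [CommRing R] [IsDomain R]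
    (ψ : AddChar A R) {x : A} {p : ℕ} (hpx : p • x = 0) (hx : ψ x ≠ 1) :
    ∑ r ∈ range p, ψ (r • x) = 0 := by
  have h := geom_sum_mul (ψ x) p
  rw [← ψ.map_nsmul_eq_pow, hpx, ψ.map_zero_eq_one, sub_self] at h
  simp_rw [ψ.map_nsmul_eq_pow]
  exact (mul_eq_zero.mp h).resolve_right (sub_ne_zero.mpr hx)

theorem ZMod.natCast_mul_ne_zero_of_not_dvd {m p : ℕ} [NeZero (m * p)] {s : ZMod (m * p)}
    (hs : ¬ p ∣ s.val) : (m : ZMod (m * p)) * s ≠ 0 := by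
  have hm : 0 < m := Nat.pos_of_ne_zero (left_ne_zero_of_mul (NeZero.ne (m * p)))
  intro h
  rw [← ZMod.natCast_zmod_val s, ← Nat.cast_mul, ZMod.natCast_eq_zero_iff] at h
  exact hs ((Nat.mul_dvd_mul_iff_left hm).mp h)

/-- For symmetric `S` this is the paper's `λ'_l = ∑_{s ∈ S} cos (2π l s / n)`. -/
noncomputable def cayEigenvalue {n : ℕ} [NeZero n] (S : Finset (ZMod n)) (l : ZMod n) : ℂ :=
  ∑ s ∈ S, stdAddChar (l * s)

section

variable {n : ℕ} [NeZero n] {S : Finset (ZMod n)}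

theorem vecMul_cayAdj_stdAddChar (l : ZMod n) :
    (fun a => stdAddChar (l * a)) ᵥ* cayAdj n S
      = cayEigenvalue S l • fun a => stdAddChar (l * a) := by
  funext b
  simp only [vecMul, dotProduct, cayAdj, mul_ite, mul_one, mul_zero, Pi.smul_apply, smul_eq_mul,
    cayEigenvalue, Finset.sum_mul]
  rw [← Equiv.sum_comp (Equiv.addRight b)]
  simp only [Equiv.coe_addRight, add_sub_cancel_right, Fintype.sum_ite_mem, mul_add,
    AddChar.map_add_eq_mul]

theorem vecMul_transM_stdAddChar (t : ℝ) (l : ZMod n) :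
    (fun a => stdAddChar (l * a)) ᵥ* transM n S t
      = Complex.exp (-(t : ℂ) * I * cayEigenvalue S l) • fun a => stdAddChar (l * a) := by
  rw [transM, Complex.exp_eq_exp_ℂ]
  apply vecMul_exp_of_vecMul_eq_smul
  rw [vecMul_smul, vecMul_cayAdj_stdAddChar, smul_smul]

theorem cayEigenvalue_neg (hsym : ∀ s ∈ S, -s ∈ S) (l : ZMod n) :
    cayEigenvalue S (-l) = cayEigenvalue S l :=
  Finset.sum_nbij' Neg.neg Neg.neg hsym hsym (fun s _ => neg_neg s) (fun s _ => neg_neg s)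
    (fun s _ => by rw [neg_mul, mul_neg])

theorem sum_range_cayEigenvalue_add_mul_eq_zero {m p : ℕ} (hn : n = m * p)
    (hps : ∀ s ∈ S, ¬ p ∣ s.val) (l : ZMod n) :
    ∑ r ∈ range p, cayEigenvalue S (l + r * m) = 0 := by
  subst hn
  unfold cayEigenvalue
  rw [Finset.sum_comm]
  refine Finset.sum_eq_zero fun s hs => ?_
  have hmul (r : ℕ) : stdAddChar ((l + (r * m : ZMod (m * p))) * s)
      = stdAddChar (l * s) * stdAddChar (r • ((m : ZMod (m * p)) * s)) := by
    rw [← AddChar.map_add_eq_mul, nsmul_eq_mul]; ring_nf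
  rw [Finset.sum_congr rfl fun r _ => hmul r, ← Finset.mul_sum]
  refine mul_eq_zero_of_right _ (AddChar.sum_range_nsmul_eq_zero _ ?_ ?_)
  · rw [nsmul_eq_mul, ← mul_assoc, ← Nat.cast_mul, mul_comm p, ZMod.natCast_self, zero_mul]
  · rw [← AddChar.map_zero_eq_one (stdAddChar (N := m * p)), ZMod.injective_stdAddChar.ne_iff]
    exact ZMod.natCast_mul_ne_zero_of_not_dvd (hps s hs)

variable {u v : ZMod n} {t : ℕ → ℝ} {γ : ℂ}

theorem tendsto_exp_cayEigenvalue
    (htend : Tendsto (fun j => (transM n S (t j)).mulVec (Pi.single u 1 : ZMod n → ℂ))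
      atTop (𝓝 (γ • (Pi.single v 1 : ZMod n → ℂ)))) (l : ZMod n) :
    Tendsto (fun k => Complex.exp (-(t k : ℂ) * I * cayEigenvalue S l)) atTop
      (𝓝 (γ * stdAddChar (l * (v - u)))) := by
  have h := (((continuous_const (y := fun a => stdAddChar (l * a))).dotProduct
    continuous_id).tendsto _).comp htend
  simp only [Function.comp_def, id, dotProduct_mulVec, vecMul_transM_stdAddChar, dotProduct_smul,
    dotProduct_single, Pi.smul_apply, smul_eq_mul, mul_one] at h
  have hu : stdAddChar (l * u) * stdAddChar (-(l * u)) = 1 := by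
    rw [← AddChar.map_add_eq_mul, add_neg_cancel, AddChar.map_zero_eq_one]
  convert h.mul_const (stdAddChar (-(l * u))) using 1
  · simp only [mul_assoc, hu, mul_one]
  · rw [mul_assoc, ← AddChar.map_add_eq_mul, mul_sub, sub_eq_add_neg]

theorem prod_stdAddChar_eq_one_of_sum_cayEigenvalue_sub_eq_zero
    (htend : Tendsto (fun j => (transM n S (t j)).mulVec (Pi.single u 1 : ZMod n → ℂ))
      atTop (𝓝 (γ • (Pi.single v 1 : ZMod n → ℂ)))) (hγ : γ ≠ 0) {ι : Type*}
    (s : Finset ι) (a b : ι → ZMod n)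
    (hrel : ∑ i ∈ s, (cayEigenvalue S (a i) - cayEigenvalue S (b i)) = 0) :
    ∏ i ∈ s, stdAddChar ((a i - b i) * (v - u)) = 1 := by
  have hconst (k : ℕ) : ∏ i ∈ s, Complex.exp (-(t k : ℂ) * I * cayEigenvalue S (a i)) /
      Complex.exp (-(t k : ℂ) * I * cayEigenvalue S (b i)) = 1 := by
    simp_rw [← Complex.exp_sub, ← Complex.exp_sum, ← mul_sub, ← mul_sum, hrel, mul_zero,
      Complex.exp_zero]
  have hlim := tendsto_finsetProd s fun i _ =>
    (tendsto_exp_cayEigenvalue htend (a i)).div (tendsto_exp_cayEigenvalue htend (b i))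
      (mul_ne_zero hγ (AddChar.val_isUnit _ _).ne_zero)
  simp only [Pi.div_apply, hconst] at hlim
  refine Eq.trans (prod_congr rfl fun i _ => ?_) (tendsto_nhds_unique hlim tendsto_const_nhds)
  rw [mul_div_mul_left _ _ hγ, sub_mul, AddChar.map_sub_eq_div]

end

theorem stmt19_general (m p : ℕ) (hodd : Odd p)
    (n : ℕ) [NeZero n] (hn : n = m * p) (S : Finset (ZMod n))
    (hsym : ∀ s ∈ S, -s ∈ S)
    (hps : ∀ s ∈ S, ¬ p ∣ s.val) :
    ∀ u v : ZMod n, u ≠ v →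
      ¬ ∃ (t : ℕ → ℝ) (γ : ℂ), ‖γ‖ = 1 ∧
        Tendsto (fun j => (transM n S (t j)).mulVec (Pi.single u 1 : ZMod n → ℂ))
          atTop (nhds (γ • (Pi.single v 1 : ZMod n → ℂ))) := by
  rintro u v huv ⟨t, γ, hγ, htend⟩
  have hγ0 : γ ≠ 0 := norm_ne_zero_iff.mp (hγ ▸ one_ne_zero)
  have hz2 : stdAddChar (v - u) ^ 2 = 1 := by
    have := prod_stdAddChar_eq_one_of_sum_cayEigenvalue_sub_eq_zero htend hγ0 {()}
      (fun _ => 1) (fun _ => -1) (by simp [cayEigenvalue_neg hsym])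
    rwa [prod_singleton, sub_neg_eq_add, add_mul, one_mul, AddChar.map_add_eq_mul, ← sq] at this
  have hzp : stdAddChar (v - u) ^ p = 1 := by
    have h1 := sum_range_cayEigenvalue_add_mul_eq_zero hn hps 1
    have h0 := sum_range_cayEigenvalue_add_mul_eq_zero hn hps 0
    simp only [zero_add] at h0
    have := prod_stdAddChar_eq_one_of_sum_cayEigenvalue_sub_eq_zero htend hγ0 (range p)
      (fun r => 1 + r * m) (fun r => r * m) (by rw [sum_sub_distrib, h1, h0, sub_zero])
    simpa using this
  obtain ⟨q, rfl⟩ := hodd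
  rw [pow_succ, pow_mul, hz2, one_pow, one_mul, ← AddChar.map_zero_eq_one (stdAddChar (N := n)),
    ZMod.injective_stdAddChar.eq_iff, sub_eq_zero] at hzp
  exact huv hzp.symm

/-- If n = mp with p an odd prime and no element of S is divisible by p, then
Cay(Z_n, S) does not exhibit pretty good state transfer between any pair of
distinct vertices. -/
theorem stmt19 (m p : ℕ) (hm : 0 < m) (hp : p.Prime) (hodd : Odd p)
    (n : ℕ) [NeZero n] (hn : n = m * p) (S : Finset (ZMod n))
    (h0 : (0 : ZMod n) ∉ S) (hsym : ∀ s ∈ S, -s ∈ S)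
    (hps : ∀ s ∈ S, ¬ p ∣ s.val) :
    ∀ u v : ZMod n, u ≠ v →
      ¬ ∃ (t : ℕ → ℝ) (γ : ℂ), ‖γ‖ = 1 ∧
        Tendsto (fun j => (transM n S (t j)).mulVec (Pi.single u 1 : ZMod n → ℂ))
          atTop (nhds (γ • (Pi.single v 1 : ZMod n → ℂ))) :=
  stmt19_general m p hodd n hn S hsym hps
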